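/- Every element a ∈ 𝒜 can be written as a finite sum a = Σ_{i,j} μ_{λ_{ij}} ∘ τ^i ∘ d^j with coefficients λ_{ij} ∈ L, and this representation is unique: if Σ_{i=0}^{m} Σ_{j=0}^{n} μ_{λ_{ij}} ∘ τ^i ∘ d^j = 0 as an endomorphism of V, then λ_{ij} = 0 for all i, j. -/
import Mathlib
set_option linter.unusedSectionVars false
set_option maxHeartbeats 1000000


/- Context: `L` is an algebraically closed field of characteristic `p`, `q = p^υ`,
`x ∈ L` is transcendental over the prime field, `rt` is the unique `q`-th root map
(`rt a ^ q = a`), `[i] = x^{q^i} - x`, `V = L → L` with pointwise addition, and `𝒜`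
is the subring of `End(V)` generated by `τ : u ↦ u^q`, the Carlitz derivative
`d : u ↦ (u(xt) - x·u(t))^{1/q}` and the scalar operators `μ_λ : u ↦ λ·u`. -/

/-- The scalar multiplication operator `μ_λ : u ↦ λ·u` on `V = L → L`. -/
def muOp (L : Type*) [CommRing L] (lam : L) : AddMonoid.End (L → L) :=
{ toFun := fun u t => lam * u t
  map_zero' := by funext t; simp
  map_add' := by intro u v; funext t; simp [mul_add] }

/-- The Frobenius operator `τ : u ↦ u^q` (`q = p^υ`) on `V = L → L`. -/
def tauOp (p υ : ℕ) [Fact p.Prime] (L : Type*) [CommRing L] [CharP L p] :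
    AddMonoid.End (L → L) :=
{ toFun := fun u t => u t ^ p ^ υ
  map_zero' := by
    funext t
    exact zero_pow (pow_ne_zero υ (Nat.Prime.ne_zero Fact.out))
  map_add' := by
    intro u v; funext t
    exact add_pow_char_pow (u t) (v t) p υ }

/-- The Carlitz derivative `d : u ↦ (u(xt) - x·u(t))^{1/q}` on `V = L → L`,
where `rt` is the (unique) `q`-th root map on `L`. -/
def dOp (p υ : ℕ) [Fact p.Prime] (L : Type*) [Field L] [CharP L p] (x : L)
    (rt : L → L) (hrt : ∀ a : L, rt a ^ p ^ υ = a) : AddMonoid.End (L → L) :=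
{ toFun := fun u t => rt (u (x * t) - x * u t)
  map_zero' := by
    have hinj : Function.Injective fun a : L => a ^ p ^ υ := by
      intro a b hab
      exact (iterateFrobenius L p υ).injective
        (by simpa [iterateFrobenius_def] using hab)
    funext t
    apply hinj
    simp [hrt, zero_pow (pow_ne_zero υ (Nat.Prime.ne_zero Fact.out))]
  map_add' := by
    have hinj : Function.Injective fun a : L => a ^ p ^ υ := by
      intro a b hab
      exact (iterateFrobenius L p υ).injective
        (by simpa [iterateFrobenius_def] using hab)
    intro u v; funext t
    apply hinj
    simp only [Pi.add_apply]
    rw [hrt, add_pow_char_pow, hrt, hrt]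
    ring }

section Basic
variable {p υ : ℕ} [Fact p.Prime] {L : Type*} [Field L] [CharP L p]


lemma endExt {M : Type*} [AddCommMonoid M] {f g : AddMonoid.End M}
    (h : ∀ u, f u = g u) : f = g := AddMonoidHom.ext h

lemma end_mul_apply {M : Type*} [AddCommMonoid M] (f g : AddMonoid.End M) (u : M) :
    (f * g) u = f (g u) := rfl

lemma end_add_apply {M : Type*} [AddCommMonoid M] (f g : AddMonoid.End M) (u : M) :
    (f + g) u = f u + g u := rfl

lemma end_neg_apply {M : Type*} [AddCommGroup M] (f : AddMonoid.End M) (u : M) :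
    (-f) u = -(f u) := rfl

@[simp] lemma muOp_apply (a : L) (u : L → L) (t : L) : muOp L a u t = a * u t := rfl

variable (p υ) in
@[simp] lemma tauOp_apply (u : L → L) (t : L) : tauOp p υ L u t = u t ^ p ^ υ := rfl

@[simp] lemma dOp_apply (x : L) (rt : L → L) (hrt : ∀ a : L, rt a ^ p ^ υ = a)
    (u : L → L) (t : L) : dOp p υ L x rt hrt u t = rt (u (x * t) - x * u t) := rfl

lemma frob_inj : Function.Injective fun a : L => a ^ p ^ υ := by
  intro a b hab
  exact (iterateFrobenius L p υ).injective (by simpa [iterateFrobenius_def] using hab)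

variable (p υ) in
lemma frob_inj' {a b : L} (h : a ^ p ^ υ = b ^ p ^ υ) : a = b :=
  frob_inj (p := p) (υ := υ) h

variable {rt : L → L}

lemma rt_frob (hrt : ∀ a : L, rt a ^ p ^ υ = a) (a : L) : rt (a ^ p ^ υ) = a :=
  frob_inj' p υ (by rw [hrt])

lemma rt_add (hrt : ∀ a : L, rt a ^ p ^ υ = a) (a b : L) :
    rt (a + b) = rt a + rt b :=
  frob_inj' p υ (by rw [hrt, add_pow_char_pow, hrt, hrt])

lemma rt_mul (hrt : ∀ a : L, rt a ^ p ^ υ = a) (a b : L) :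
    rt (a * b) = rt a * rt b :=
  frob_inj' p υ (by rw [hrt, mul_pow, hrt, hrt])

lemma rt_zero (hrt : ∀ a : L, rt a ^ p ^ υ = a) : rt (0 : L) = 0 :=
  frob_inj' p υ (by rw [hrt, zero_pow (pow_ne_zero υ (Nat.Prime.ne_zero Fact.out))])

lemma rt_sub (hrt : ∀ a : L, rt a ^ p ^ υ = a) (a b : L) :
    rt (a - b) = rt a - rt b :=
  frob_inj' p υ (by rw [hrt, sub_pow_char_pow, hrt, hrt])

-- muOp algebra
lemma muOp_mul (a b : L) : muOp L a * muOp L b = muOp L (a * b) := by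
  refine endExt fun u => funext fun t => ?_
  simp [end_mul_apply, mul_assoc]

lemma muOp_add (a b : L) : muOp L a + muOp L b = muOp L (a + b) := by
  refine endExt fun u => funext fun t => ?_
  simp only [end_add_apply, Pi.add_apply, muOp_apply, add_mul]

lemma muOp_one : muOp L (1:L) = 1 := by
  refine endExt fun u => funext fun t => ?_
  simp [AddMonoid.End.one_apply]

lemma muOp_zero : muOp L (0:L) = 0 := by
  refine endExt fun u => funext fun t => ?_
  simp [AddMonoid.End.zero_apply]

lemma muOp_neg (a : L) : muOp L (-a) = -(muOp L a) := by
  refine endExt fun u => funext fun t => ?_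
  simp only [end_neg_apply, Pi.neg_apply, muOp_apply, neg_mul]

variable (p υ) in
lemma tau_mu (a : L) :
    tauOp p υ L * muOp L a = muOp L (a ^ p ^ υ) * tauOp p υ L := by
  refine endExt fun u => funext fun t => ?_
  simp [end_mul_apply, mul_pow]

lemma d_mu (x : L) (hrt : ∀ a : L, rt a ^ p ^ υ = a) (a : L) :
    dOp p υ L x rt hrt * muOp L a = muOp L (rt a) * dOp p υ L x rt hrt := by
  refine endExt fun u => funext fun t => ?_
  simp only [end_mul_apply, dOp_apply, muOp_apply]
  rw [show a * u (x * t) - x * (a * u t) = a * (u (x * t) - x * u t) by ring,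
    rt_mul hrt]

lemma d_tau (x : L) (hrt : ∀ a : L, rt a ^ p ^ υ = a) :
    dOp p υ L x rt hrt * tauOp p υ L
      = tauOp p υ L * dOp p υ L x rt hrt + muOp L (x - rt x) := by
  refine endExt fun u => funext fun t => ?_
  simp only [end_mul_apply, end_add_apply, dOp_apply, tauOp_apply, muOp_apply,
    Pi.add_apply]
  have h : u (x * t) ^ p ^ υ - x * u t ^ p ^ υ
      = (u (x * t) - rt x * u t) ^ p ^ υ := by
    rw [sub_pow_char_pow, mul_pow, hrt]
  rw [h, rt_frob hrt, hrt]
  ring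

end Basic

section Rep
variable (p υ : ℕ) [Fact p.Prime] (L : Type*) [Field L] [CharP L p]
  (x : L) (rt : L → L) (hrt : ∀ a : L, rt a ^ p ^ υ = a)

def dsum (m n : ℕ) (lam : ℕ → ℕ → L) : AddMonoid.End (L → L) :=
  ∑ i ∈ Finset.range (m + 1), ∑ j ∈ Finset.range (n + 1),
      muOp L (lam i j) * (tauOp p υ L) ^ i * (dOp p υ L x rt hrt) ^ j

def IsRep (a : AddMonoid.End (L → L)) : Prop :=
  ∃ m n lam, a = dsum p υ L x rt hrt m n lam

variable {p υ L x rt hrt}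

local notation "T" => tauOp p υ L
local notation "D" => dOp p υ L x rt hrt
local notation "DS" => dsum p υ L x rt hrt
local notation "RP" => IsRep p υ L x rt hrt

lemma dsum_zero : DS 0 0 (fun _ _ => (0:L)) = 0 := by
  simp [dsum, muOp_zero]

lemma Rep_zero : RP 0 := ⟨0, 0, _, dsum_zero.symm⟩

lemma Rep_single (a : L) (i j : ℕ) : RP (muOp L a * T ^ i * D ^ j) := by
  refine ⟨i, j, fun i' j' => if i' = i ∧ j' = j then a else 0, ?_⟩
  unfold dsum
  rw [Finset.sum_eq_single i, Finset.sum_eq_single j]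
  · simp
  · intro j' _ hj'
    simp [hj', muOp_zero]
  · intro h; exact absurd (Finset.self_mem_range_succ j) h
  · intro i' _ hi'
    apply Finset.sum_eq_zero
    intro j' _
    simp [hi', muOp_zero]
  · intro h; exact absurd (Finset.self_mem_range_succ i) h

lemma dsum_pad {m n m' n' : ℕ} (hm : m ≤ m') (hn : n ≤ n') (lam : ℕ → ℕ → L) :
    DS m' n' (fun i j => if i ≤ m ∧ j ≤ n then lam i j else 0) = DS m n lam := by
  unfold dsum
  rw [← Finset.sum_subset (Finset.range_subset_range.2 (by omega : m + 1 ≤ m' + 1))]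
  · refine Finset.sum_congr rfl fun i hi => ?_
    rw [← Finset.sum_subset (Finset.range_subset_range.2 (by omega : n + 1 ≤ n' + 1))]
    · refine Finset.sum_congr rfl fun j hj => ?_
      simp only [Finset.mem_range] at hi hj
      rw [show (fun i j => if i ≤ m ∧ j ≤ n then lam i j else 0) i j = lam i j from
        if_pos ⟨by omega, by omega⟩]
    · intro j _ hj
      simp only [Finset.mem_range] at hj
      rw [show (fun i j => if i ≤ m ∧ j ≤ n then lam i j else 0) i j = 0 from
        if_neg (by omega), muOp_zero, zero_mul, zero_mul]
  · intro i _ hi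
    simp only [Finset.mem_range] at hi
    apply Finset.sum_eq_zero
    intro j _
    rw [show (fun i j => if i ≤ m ∧ j ≤ n then lam i j else 0) i j = 0 from
      if_neg (by omega), muOp_zero, zero_mul, zero_mul]

lemma dsum_add (m n : ℕ) (f g : ℕ → ℕ → L) :
    DS m n f + DS m n g = DS m n (fun i j => f i j + g i j) := by
  unfold dsum
  rw [← Finset.sum_add_distrib]
  refine Finset.sum_congr rfl fun i _ => ?_
  rw [← Finset.sum_add_distrib]
  refine Finset.sum_congr rfl fun j _ => ?_
  rw [← add_mul, ← add_mul, muOp_add]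

lemma Rep_add {a b : AddMonoid.End (L → L)} (ha : RP a) (hb : RP b) : RP (a + b) := by
  obtain ⟨m1, n1, f1, rfl⟩ := ha
  obtain ⟨m2, n2, f2, rfl⟩ := hb
  rw [← dsum_pad (le_max_left m1 m2) (le_max_left n1 n2) f1,
    ← dsum_pad (le_max_right m1 m2) (le_max_right n1 n2) f2, dsum_add]
  exact ⟨_, _, _, rfl⟩

lemma Rep_sum {ι : Type*} (s : Finset ι) (f : ι → AddMonoid.End (L → L))
    (h : ∀ i ∈ s, RP (f i)) : RP (∑ i ∈ s, f i) :=
  Finset.sum_induction f _ (fun _ _ ha hb => Rep_add ha hb) Rep_zero h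

lemma tau_mul_single (a : L) (i j : ℕ) :
    tauOp p υ L * (muOp L a * T ^ i * D ^ j)
      = muOp L (a ^ p ^ υ) * T ^ (i+1) * D ^ j := by
  rw [← mul_assoc, ← mul_assoc, tau_mu,
    mul_assoc (muOp L (a ^ p ^ υ)) _ (T ^ i), ← pow_succ']

lemma single_mul_d (a : L) (i j : ℕ) :
    (muOp L a * T ^ i * D ^ j) * dOp p υ L x rt hrt
      = muOp L a * T ^ i * D ^ (j+1) := by
  rw [mul_assoc, ← pow_succ]

lemma mu_dsum (c : L) (m n : ℕ) (f : ℕ → ℕ → L) :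
    muOp L c * DS m n f = DS m n (fun i j => c * f i j) := by
  unfold dsum
  rw [Finset.mul_sum]
  refine Finset.sum_congr rfl fun i _ => ?_
  rw [Finset.mul_sum]
  refine Finset.sum_congr rfl fun j _ => ?_
  rw [← mul_assoc, ← mul_assoc, muOp_mul]

lemma tau_dsum (m n : ℕ) (f : ℕ → ℕ → L) :
    tauOp p υ L * DS m n f
      = DS (m+1) n (fun i j => if i = 0 then 0 else f (i-1) j ^ p ^ υ) := by
  unfold dsum
  rw [Finset.mul_sum]
  conv_rhs => rw [Finset.sum_range_succ']
  have h0 : (∑ j ∈ Finset.range (n+1),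
      muOp L ((fun i j => if i = 0 then 0 else f (i-1) j ^ p ^ υ) 0 j) * T ^ 0 * D ^ j) = 0 := by
    apply Finset.sum_eq_zero
    intro j _
    rw [show (fun i j => if i = 0 then 0 else f (i-1) j ^ p ^ υ) 0 j = (0:L) from if_pos rfl,
      muOp_zero, zero_mul, zero_mul]
  rw [h0, add_zero]
  refine Finset.sum_congr rfl fun i _ => ?_
  rw [Finset.mul_sum]
  refine Finset.sum_congr rfl fun j _ => ?_
  rw [tau_mul_single]
  simp

lemma dsum_mul_d (m n : ℕ) (f : ℕ → ℕ → L) :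
    DS m n f * dOp p υ L x rt hrt
      = DS m (n+1) (fun i j => if j = 0 then 0 else f i (j-1)) := by
  unfold dsum
  rw [Finset.sum_mul]
  refine Finset.sum_congr rfl fun i _ => ?_
  rw [Finset.sum_mul]
  conv_rhs => rw [Finset.sum_range_succ']
  have h0 : muOp L ((fun i j => if j = 0 then 0 else f i (j-1)) i 0) * T ^ i * D ^ 0 = 0 := by
    rw [show (fun i j => if j = 0 then 0 else f i (j-1)) i 0 = (0:L) from if_pos rfl,
      muOp_zero, zero_mul, zero_mul]
  rw [h0, add_zero]
  refine Finset.sum_congr rfl fun j _ => ?_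
  rw [single_mul_d]
  simp

lemma Rep_mu_mul (c : L) {a : AddMonoid.End (L → L)} (ha : RP a) : RP (muOp L c * a) := by
  obtain ⟨m, n, f, rfl⟩ := ha
  rw [mu_dsum]
  exact ⟨_, _, _, rfl⟩

lemma Rep_neg {a : AddMonoid.End (L → L)} (ha : RP a) : RP (-a) := by
  have h := Rep_mu_mul (-1 : L) ha
  rwa [show muOp L (-1 : L) * a = -a from endExt fun u => funext fun t => by
    simp [end_mul_apply, end_neg_apply]] at h

lemma Rep_tau_mul {a : AddMonoid.End (L → L)} (ha : RP a) : RP (tauOp p υ L * a) := by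
  obtain ⟨m, n, f, rfl⟩ := ha
  rw [tau_dsum]
  exact ⟨_, _, _, rfl⟩

lemma Rep_mul_d {a : AddMonoid.End (L → L)} (ha : RP a) : RP (a * dOp p υ L x rt hrt) := by
  obtain ⟨m, n, f, rfl⟩ := ha
  rw [dsum_mul_d]
  exact ⟨_, _, _, rfl⟩

lemma Rep_mul_dpow {a : AddMonoid.End (L → L)} (ha : RP a) (j : ℕ) :
    RP (a * dOp p υ L x rt hrt ^ j) := by
  induction j with
  | zero => simpa using ha
  | succ j ih =>
    rw [pow_succ, ← mul_assoc]
    exact Rep_mul_d ih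

lemma Rep_mu' (c : L) : RP (muOp L c) := by
  have h := Rep_single (p := p) (υ := υ) (x := x) (rt := rt) (hrt := hrt) c 0 0
  simpa using h

lemma Rep_tau : RP (tauOp p υ L) := by
  have h := Rep_single (p := p) (υ := υ) (x := x) (rt := rt) (hrt := hrt) 1 1 0
  rw [muOp_one, pow_zero, pow_one, one_mul, mul_one] at h
  exact h

lemma Rep_d : RP (dOp p υ L x rt hrt) := by
  have h := Rep_single (p := p) (υ := υ) (x := x) (rt := rt) (hrt := hrt) 1 0 1
  rw [muOp_one, pow_zero, pow_one, one_mul, one_mul] at h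
  exact h

lemma Rep_one : RP 1 := by
  have h := Rep_mu' (p := p) (υ := υ) (x := x) (rt := rt) (hrt := hrt) 1
  rwa [muOp_one] at h

lemma Rep_d_tau_pow (i : ℕ) : RP (dOp p υ L x rt hrt * T ^ i) := by
  induction i with
  | zero => rw [pow_zero, mul_one]; exact Rep_d
  | succ i ih =>
    have key : dOp p υ L x rt hrt * T ^ (i+1)
        = T * (D * T ^ i) + muOp L (x - rt x) * T ^ i := by
      rw [pow_succ', ← mul_assoc, d_tau x hrt, add_mul, mul_assoc]
    rw [key]
    refine Rep_add (Rep_tau_mul ih) ?_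
    have h := Rep_single (p := p) (υ := υ) (x := x) (rt := rt) (hrt := hrt) (x - rt x) i 0
    rwa [pow_zero, mul_one] at h

lemma Rep_d_mul {a : AddMonoid.End (L → L)} (ha : RP a) :
    RP (dOp p υ L x rt hrt * a) := by
  obtain ⟨m, n, f, rfl⟩ := ha
  unfold dsum
  rw [Finset.mul_sum]
  refine Rep_sum _ _ fun i _ => ?_
  rw [Finset.mul_sum]
  refine Rep_sum _ _ fun j _ => ?_
  have key : dOp p υ L x rt hrt * (muOp L (f i j) * T ^ i * D ^ j)
      = muOp L (rt (f i j)) * (D * T ^ i * D ^ j) := by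
    rw [← mul_assoc, ← mul_assoc, d_mu x hrt, mul_assoc, mul_assoc, mul_assoc]
  rw [key]
  exact Rep_mu_mul _ (Rep_mul_dpow (Rep_d_tau_pow i) j)

lemma Rep_taupow_mul {a : AddMonoid.End (L → L)} (ha : RP a) (i : ℕ) :
    RP (tauOp p υ L ^ i * a) := by
  induction i with
  | zero => rwa [pow_zero, one_mul]
  | succ i ih =>
    rw [pow_succ', mul_assoc]
    exact Rep_tau_mul ih

lemma Rep_dpow_mul {a : AddMonoid.End (L → L)} (ha : RP a) (j : ℕ) :
    RP (dOp p υ L x rt hrt ^ j * a) := by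
  induction j with
  | zero => rwa [pow_zero, one_mul]
  | succ j ih =>
    rw [pow_succ', mul_assoc]
    exact Rep_d_mul ih

lemma Rep_mul {a b : AddMonoid.End (L → L)} (ha : RP a) (hb : RP b) : RP (a * b) := by
  obtain ⟨m, n, f, rfl⟩ := ha
  unfold dsum
  rw [Finset.sum_mul]
  refine Rep_sum _ _ fun i _ => ?_
  rw [Finset.sum_mul]
  refine Rep_sum _ _ fun j _ => ?_
  rw [mul_assoc, mul_assoc]
  exact Rep_mu_mul _ (Rep_taupow_mul (Rep_dpow_mul hb j) i)

end Rep

section Uniq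
variable {p υ : ℕ} [Fact p.Prime] {L : Type*} [Field L] [CharP L p]

/-- Coefficients of the expansion of `d^j`. -/
def cc (p υ : ℕ) {L : Type*} [Field L] (x : L) : ℕ → ℕ → L
  | 0, 0 => 1
  | 0, _+1 => 0
  | j+1, 0 => -(x ^ (p ^ υ) ^ j * cc p υ x j 0)
  | j+1, k+1 => cc p υ x j k - x ^ (p ^ υ) ^ j * cc p υ x j (k+1)

lemma cc_gt (x : L) : ∀ j k : ℕ, j < k → cc p υ x j k = 0 := by
  intro j
  induction j with
  | zero =>
    intro k hk
    obtain ⟨k', rfl⟩ := Nat.exists_eq_add_of_lt hk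
    rfl
  | succ j ih =>
    intro k hk
    obtain ⟨k', rfl⟩ : ∃ k', k = k' + 1 := ⟨k - 1, by omega⟩
    show cc p υ x j k' - x ^ (p ^ υ) ^ j * cc p υ x j (k'+1) = 0
    rw [ih k' (by omega), ih (k'+1) (by omega), mul_zero, sub_zero]

lemma cc_diag (x : L) : ∀ j : ℕ, cc p υ x j j = 1 := by
  intro j
  induction j with
  | zero => rfl
  | succ j ih =>
    show cc p υ x j j - x ^ (p ^ υ) ^ j * cc p υ x j (j+1) = 1
    rw [ih, cc_gt x j (j+1) (by omega), mul_zero, sub_zero]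

variable {rt : L → L}

lemma rt_iter_add (hrt : ∀ a : L, rt a ^ p ^ υ = a) (j : ℕ) (a b : L) :
    rt^[j] (a + b) = rt^[j] a + rt^[j] b := by
  induction j generalizing a b with
  | zero => simp
  | succ j ih =>
    rw [Function.iterate_succ_apply, Function.iterate_succ_apply,
      Function.iterate_succ_apply, rt_add hrt, ih]

lemma rt_iter_mul (hrt : ∀ a : L, rt a ^ p ^ υ = a) (j : ℕ) (a b : L) :
    rt^[j] (a * b) = rt^[j] a * rt^[j] b := by
  induction j generalizing a b with
  | zero => simp
  | succ j ih =>
    rw [Function.iterate_succ_apply, Function.iterate_succ_apply,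
      Function.iterate_succ_apply, rt_mul hrt, ih]

lemma rt_iter_zero (hrt : ∀ a : L, rt a ^ p ^ υ = a) (j : ℕ) :
    rt^[j] (0 : L) = 0 := by
  induction j with
  | zero => simp
  | succ j ih => rw [Function.iterate_succ_apply, rt_zero hrt, ih]

lemma rt_iter_sub (hrt : ∀ a : L, rt a ^ p ^ υ = a) (j : ℕ) (a b : L) :
    rt^[j] (a - b) = rt^[j] a - rt^[j] b := by
  induction j generalizing a b with
  | zero => simp
  | succ j ih =>
    rw [Function.iterate_succ_apply, Function.iterate_succ_apply,
      Function.iterate_succ_apply, rt_sub hrt, ih]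

lemma rt_iter_frob (hrt : ∀ a : L, rt a ^ p ^ υ = a) (j : ℕ) (a : L) :
    rt^[j] (a ^ (p ^ υ) ^ j) = a := by
  induction j generalizing a with
  | zero => simp
  | succ j ih =>
    rw [Function.iterate_succ_apply, pow_succ, pow_mul, rt_frob hrt, ih]

lemma rt_iter_sum (hrt : ∀ a : L, rt a ^ p ^ υ = a) (j : ℕ) {ι : Type*}
    (s : Finset ι) (f : ι → L) :
    rt^[j] (∑ i ∈ s, f i) = ∑ i ∈ s, rt^[j] (f i) := by
  classical
  induction s using Finset.cons_induction with
  | empty => simp [rt_iter_zero hrt]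
  | cons i s hi ih => rw [Finset.sum_cons, Finset.sum_cons, rt_iter_add hrt, ih]

lemma end_sum_apply {M : Type*} [AddCommMonoid M] {ι : Type*} (s : Finset ι)
    (f : ι → AddMonoid.End M) (u : M) :
    (∑ i ∈ s, f i) u = ∑ i ∈ s, f i u := by
  classical
  induction s using Finset.cons_induction with
  | empty => rfl
  | cons i s hi ih => rw [Finset.sum_cons, Finset.sum_cons, end_add_apply, ih]

lemma taupow_apply (i : ℕ) (u : L → L) (t : L) :
    ((tauOp p υ L) ^ i) u t = u t ^ (p ^ υ) ^ i := by
  induction i generalizing u with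
  | zero => simp
  | succ i ih =>
    rw [pow_succ', end_mul_apply, tauOp_apply, ih, ← pow_mul, ← pow_succ]

variable {x : L}

lemma dpow_apply (hrt : ∀ a : L, rt a ^ p ^ υ = a) (j : ℕ) (u : L → L) (t : L) :
    ((dOp p υ L x rt hrt) ^ j) u t
      = rt^[j] (∑ k ∈ Finset.range (j+1), cc p υ x j k * u (x ^ k * t)) := by
  induction j generalizing t with
  | zero => simp [cc]
  | succ j ih =>
    rw [pow_succ', end_mul_apply, dOp_apply, ih, ih,
      show x * rt^[j] (∑ k ∈ Finset.range (j+1), cc p υ x j k * u (x ^ k * t))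
        = rt^[j] (x ^ (p ^ υ) ^ j *
            ∑ k ∈ Finset.range (j+1), cc p υ x j k * u (x ^ k * t)) from by
          rw [rt_iter_mul hrt, rt_iter_frob hrt],
      ← rt_iter_sub hrt, Function.iterate_succ_apply' rt j]
    congr 2
    have e1 : ∀ k : ℕ, x ^ k * (x * t) = x ^ (k+1) * t := fun k => by ring
    simp only [e1]
    rw [Finset.sum_range_succ' (fun k => cc p υ x j k * u (x ^ k * t)) j]
    rw [show (∑ k ∈ Finset.range j, cc p υ x j (k+1) * u (x ^ (k+1) * t))
        = ∑ k ∈ Finset.range (j+1), cc p υ x j (k+1) * u (x ^ (k+1) * t) from by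
      rw [Finset.sum_range_succ, cc_gt x j (j+1) (by omega), zero_mul, add_zero]]
    rw [Finset.sum_range_succ' (fun k => cc p υ x (j+1) k * u (x ^ k * t)) (j+1)]
    rw [mul_add, Finset.mul_sum, sub_add_eq_sub_sub, ← Finset.sum_sub_distrib,
      sub_eq_add_neg]
    congr 1
    · refine Finset.sum_congr rfl fun k _ => ?_
      rw [show cc p υ x (j+1) (k+1)
          = cc p υ x j k - x ^ (p ^ υ) ^ j * cc p υ x j (k+1) from rfl]
      ring
    · rw [show cc p υ x (j+1) 0 = -(x ^ (p ^ υ) ^ j * cc p υ x j 0) from rfl]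
      ring

attribute [local instance] Classical.propDecidable

lemma dsum_apply (x : L) (rt : L → L) (hrt : ∀ a : L, rt a ^ p ^ υ = a)
    (m n : ℕ) (lam : ℕ → ℕ → L) (u : L → L) (t : L) :
    dsum p υ L x rt hrt m n lam u t
      = ∑ i ∈ Finset.range (m+1), ∑ j ∈ Finset.range (n+1),
          lam i j * (((dOp p υ L x rt hrt) ^ j) u t) ^ (p ^ υ) ^ i := by
  unfold dsum
  rw [end_sum_apply, Finset.sum_apply]
  refine Finset.sum_congr rfl fun i _ => ?_
  rw [end_sum_apply, Finset.sum_apply]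
  refine Finset.sum_congr rfl fun j _ => ?_
  rw [mul_assoc, end_mul_apply, muOp_apply, end_mul_apply, taupow_apply]

lemma x_pow_inj [Algebra (ZMod p) L] (hx : Transcendental (ZMod p) x)
    {k k0 : ℕ} (h : x ^ k = x ^ k0) : k = k0 := by
  by_contra hne
  refine hx ⟨Polynomial.X ^ k - Polynomial.X ^ k0, sub_ne_zero.2 fun hXX => hne ?_, ?_⟩
  · have := congrArg Polynomial.natDegree hXX
    simpa using this
  · rw [map_sub, map_pow, map_pow, Polynomial.aeval_X, h, sub_self]

lemma dpow_delta [Algebra (ZMod p) L] (hrt : ∀ a : L, rt a ^ p ^ υ = a)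
    (hx : Transcendental (ZMod p) x) (j k0 : ℕ) (c : L) :
    ((dOp p υ L x rt hrt) ^ j) (fun y => if y = x ^ k0 then c else 0) 1
      = if k0 ≤ j then rt^[j] (cc p υ x j k0 * c) else 0 := by
  rw [dpow_apply hrt]
  have harg : ∀ k : ℕ, (if x ^ k * 1 = x ^ k0 then c else 0)
      = if k = k0 then c else 0 := by
    intro k
    rw [mul_one]
    by_cases hk : k = k0
    · subst hk; simp
    · rw [if_neg hk, if_neg fun hc => hk (x_pow_inj hx hc)]
  simp only [harg]
  by_cases hk0 : k0 ≤ j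
  · rw [if_pos hk0]
    congr 1
    rw [Finset.sum_eq_single_of_mem k0 (Finset.mem_range.2 (by omega))
      (fun k _ hk => by rw [if_neg hk, mul_zero]), if_pos rfl]
  · rw [if_neg hk0]
    rw [Finset.sum_eq_zero fun k hkmem => by
      rw [if_neg (by simp only [Finset.mem_range] at hkmem; omega), mul_zero]]
    exact rt_iter_zero hrt j

lemma lform_zero [Infinite L] (hq : 2 ≤ p ^ υ) (m : ℕ) (a : ℕ → L)
    (h : ∀ b : L, (∑ i ∈ Finset.range (m+1), a i * b ^ (p ^ υ) ^ i) = 0) :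
    ∀ i ≤ m, a i = 0 := by
  intro i hi
  have hP : (∑ i ∈ Finset.range (m+1),
      Polynomial.C (a i) * Polynomial.X ^ (p ^ υ) ^ i) = (0 : Polynomial L) := by
    apply Polynomial.funext
    intro b
    simpa [Polynomial.eval_finset_sum] using h b
  have hco := congrArg (fun P => Polynomial.coeff P ((p ^ υ) ^ i)) hP
  simp only [Polynomial.finset_sum_coeff, Polynomial.coeff_C_mul,
    Polynomial.coeff_X_pow, Polynomial.coeff_zero] at hco
  rw [Finset.sum_eq_single_of_mem i (Finset.mem_range.2 (by omega))
    (fun k _ hk => by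
      rw [if_neg fun hc => hk (Nat.pow_right_injective hq hc.symm), mul_zero])] at hco
  rwa [if_pos rfl, mul_one] at hco

lemma uniq_main [Algebra (ZMod p) L] (hυ : 1 ≤ υ) (hx : Transcendental (ZMod p) x)
    (hrt : ∀ a : L, rt a ^ p ^ υ = a) (m n : ℕ) (lam : ℕ → ℕ → L)
    (hsum : dsum p υ L x rt hrt m n lam = 0) : ∀ i ≤ m, ∀ j ≤ n, lam i j = 0 := by
  have hq : 2 ≤ p ^ υ := by
    calc 2 ≤ p := (Fact.out : p.Prime).two_le
    _ = p ^ 1 := (pow_one p).symm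
    _ ≤ p ^ υ := Nat.pow_le_pow_right (by have := (Fact.out : p.Prime).two_le; omega) hυ
  haveI : Infinite L :=
    Infinite.of_injective (fun k : ℕ => x ^ k) fun k1 k2 h12 => x_pow_inj hx h12
  have hqe : ∀ i : ℕ, ((p : ℕ) ^ υ) ^ i ≠ 0 :=
    fun i => pow_ne_zero i (pow_ne_zero υ (Nat.Prime.ne_zero Fact.out))
  have key : ∀ g : ℕ, ∀ k0 ≤ n, n - k0 < g → ∀ i ≤ m, lam i k0 = 0 := by
    intro g
    induction g with
    | zero => intro k0 hk0 hlt; exact absurd hlt (by omega)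
    | succ g ih =>
      intro k0 hk0 hlt
      have heval : ∀ b : L,
          (∑ i ∈ Finset.range (m+1), lam i k0 * b ^ (p ^ υ) ^ i) = 0 := by
        intro b
        have h1 : dsum p υ L x rt hrt m n lam
            (fun y => if y = x ^ k0 then b ^ (p ^ υ) ^ k0 else 0) 1 = 0 := by
          rw [hsum]; rfl
        rw [dsum_apply] at h1
        rw [← h1]
        refine Finset.sum_congr rfl fun i hi2 => ?_
        rw [Finset.sum_eq_single_of_mem k0 (Finset.mem_range.2 (by omega))]
        · rw [dpow_delta hrt hx, if_pos (le_refl k0), cc_diag, one_mul,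
            rt_iter_frob hrt]
        · intro j hj hjne
          simp only [Finset.mem_range] at hj
          rcases Nat.lt_or_ge j k0 with hlt2 | hge
          · rw [dpow_delta hrt hx, if_neg (by omega), zero_pow (hqe i), mul_zero]
          · rw [ih j (by omega) (by omega) i
              (by simp only [Finset.mem_range] at hi2; omega), zero_mul]
      exact lform_zero hq m (fun i => lam i k0) heval
  intro i hi j hj
  exact key (n - j + 1) j hj (by omega) i hi

end Uniq

/-- The ring `𝒜` of `F_q`-linear polynomial differential operators: the subring of
`End(V)` generated by `τ`, `d` and the scalar operators `μ_λ`, `λ ∈ L`. -/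
def opRingA (p υ : ℕ) [Fact p.Prime] (L : Type*) [Field L] [CharP L p] (x : L)
    (rt : L → L) (hrt : ∀ a : L, rt a ^ p ^ υ = a) :
    Subring (AddMonoid.End (L → L)) :=
  Subring.closure (Set.range (muOp L) ∪ {tauOp p υ L, dOp p υ L x rt hrt})

/-- Every element of `𝒜` is a finite sum `Σ μ_λij ∘ τ^i ∘ d^j`, and
this representation is unique: if such a sum vanishes then all coefficients vanish. -/
theorem opRing_unique_representation (p υ : ℕ) [Fact p.Prime] (hυ : 1 ≤ υ)
    (L : Type*) [Field L] [IsAlgClosed L] [CharP L p] [Algebra (ZMod p) L]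
    (x : L) (hx : Transcendental (ZMod p) x)
    (rt : L → L) (hrt : ∀ a : L, rt a ^ p ^ υ = a) :
    (∀ a ∈ opRingA p υ L x rt hrt, ∃ (m n : ℕ) (lam : ℕ → ℕ → L),
      a = ∑ i ∈ Finset.range (m + 1), ∑ j ∈ Finset.range (n + 1),
          muOp L (lam i j) * (tauOp p υ L) ^ i * (dOp p υ L x rt hrt) ^ j) ∧
    (∀ (m n : ℕ) (lam : ℕ → ℕ → L),
      (∑ i ∈ Finset.range (m + 1), ∑ j ∈ Finset.range (n + 1),
          muOp L (lam i j) * (tauOp p υ L) ^ i * (dOp p υ L x rt hrt) ^ j) = 0 →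
      ∀ i ≤ m, ∀ j ≤ n, lam i j = 0) := by
  constructor
  · intro a ha
    have hrep : IsRep p υ L x rt hrt a := by
      refine Subring.closure_induction (fun b hb => ?_) Rep_zero Rep_one
        (fun b c _ _ hb hc => Rep_add hb hc) (fun b _ hb => Rep_neg hb)
        (fun b c _ _ hb hc => Rep_mul hb hc) ha
      simp only [Set.mem_union, Set.mem_range, Set.mem_insert_iff,
        Set.mem_singleton_iff] at hb
      rcases hb with ⟨lamb, rfl⟩ | rfl | rfl
      · exact Rep_mu' lamb
      · exact Rep_tau
      · exact Rep_d
    obtain ⟨m, n, lam, h⟩ := hrep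
    exact ⟨m, n, lam, h⟩
  · intro m n lam hsum
    exact uniq_main hυ hx hrt m n lam hsum
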